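/- Let I : ℝ² → ℝ be continuous with compact support, let β > 0, let w > 0, and let V be the closed subspace of the Hilbert space L²(ℝ²) consisting of functions supported in the square C = [−w/2, w/2]². Define g : V → ℝ by g(K) = ∫_{ℝ²} r_β((K ⋆ I)(x)) dx. Then g is Fréchet differentiable at every K ∈ V, and its derivative applied to δK ∈ V is ∫_{ℝ²} (r_β'(K ⋆ I) ⋆ I)(z) · δK(z) dz; equivalently, the gradient of g at K with respect to the L² inner product on V is the restriction of r_β'(K ⋆ I) ⋆ I to C. -/

import Mathlib

/-!
Since `(K ⋆ I)(x) = ⟪K, I (· + x)⟫`, the map `K ↦ K ⋆ I` is linear and bounded from `L²` into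
bounded functions, and for `K` supported in `C` its values vanish off the compact set
`tsupport I - C`. A second-order Taylor bound for the smooth `r_β` on a bounded interval makes
`g (K + h) - g K - ∫ r_β'(K ⋆ I) · (h ⋆ I)` of order `‖h‖²`, and Fubini moves the correlation
with `I` from `h` onto `r_β'(K ⋆ I)`, so the derivative is the inner product with the
restriction of `r_β'(K ⋆ I) ⋆ I` to `C`.
-/

open MeasureTheory

/-- The cross-correlation `(f ⋆ g)(z) = ∫_{ℝ²} f(x)·g(x + z) dx`. -/
noncomputable def crossCorr (f g : ℝ × ℝ → ℝ) (z : ℝ × ℝ) : ℝ :=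
  ∫ x : ℝ × ℝ, f x * g (x + z)

/-- The Swish activation `r_β(x) = x/(1 + exp(−βx))`. -/
noncomputable def swish (β x : ℝ) : ℝ := x / (1 + Real.exp (-β * x))

/-- The closed subspace of `L²(ℝ²)` of functions (a.e.) supported in `C`. -/
noncomputable def suppSubmodule (C : Set (ℝ × ℝ)) :
    Submodule ℝ (Lp ℝ 2 (volume : Measure (ℝ × ℝ))) where
  carrier := {f | ∀ᵐ x : ℝ × ℝ, x ∉ C → f x = 0}
  add_mem' := by
    intro f g hf hg
    filter_upwards [hf, hg, Lp.coeFn_add f g] with x h1 h2 h3 hx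
    simp only [h3, Pi.add_apply, h1 hx, h2 hx, add_zero]
  zero_mem' := by
    filter_upwards [Lp.coeFn_zero ℝ 2 (volume : Measure (ℝ × ℝ))] with x h _
    simp [h]
  smul_mem' := by
    intro c f hf
    filter_upwards [hf, Lp.coeFn_smul c f] with x h1 h2 hx
    simp [h2, h1 hx]

open Set Asymptotics
open scoped InnerProductSpace Pointwise Topology

lemma swish_zero (β : ℝ) : swish β 0 = 0 := by simp [swish]

lemma contDiff_swish (β : ℝ) {n : WithTop ℕ∞} : ContDiff ℝ n (swish β) :=
  contDiff_id.div (contDiff_const.add (Real.contDiff_exp.comp (contDiff_const.mul contDiff_id)))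
    fun _ => by positivity

theorem ContDiff.exists_abs_sub_sub_deriv_mul_le {f : ℝ → ℝ} (hf : ContDiff ℝ 2 f) (R : ℝ) :
    ∃ L, 0 ≤ L ∧ ∀ a b, |a| ≤ R → |b| ≤ R →
      |f b - f a - deriv f a * (b - a)| ≤ L * (b - a) ^ 2 := by
  obtain ⟨hdf, -, hf'⟩ := contDiff_succ_iff_deriv (n := 1).mp hf
  obtain ⟨hdf', -, hf''⟩ := contDiff_succ_iff_deriv (n := 0).mp hf'
  obtain ⟨K, hK⟩ := (isCompact_Icc (a := -R) (b := R)).exists_bound_of_continuousOn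
    hf''.continuous.continuousOn
  refine ⟨max K 0, le_max_right _ _, fun a b ha hb => ?_⟩
  have hsub : uIcc a b ⊆ Icc (-R) R := uIcc_subset_Icc (abs_le.mp ha) (abs_le.mp hb)
  have hderiv_sub : ∀ z ∈ uIcc a b, ‖deriv f z - deriv f a‖ ≤ max K 0 * |b - a| := fun z hz =>
    calc ‖deriv f z - deriv f a‖ ≤ max K 0 * ‖z - a‖ :=
          (convex_uIcc a b).norm_image_sub_le_of_norm_deriv_le (fun y _ => hdf' y)
            (fun y hy => (hK y (hsub hy)).trans (le_max_left _ _)) left_mem_uIcc hz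
      _ ≤ max K 0 * |b - a| :=
          mul_le_mul_of_nonneg_left (abs_sub_left_of_mem_uIcc hz) (le_max_right _ _)
  have hlin : ∀ z, HasDerivAt (fun t => f t - deriv f a * t) (deriv f z - deriv f a) z :=
    fun z => by
      have := (hdf z).hasDerivAt.sub ((hasDerivAt_id' z).const_mul (deriv f a))
      rwa [mul_one] at this
  have := (convex_uIcc a b).norm_image_sub_le_of_norm_deriv_le
    (fun z _ => (hlin z).differentiableAt) (fun z hz => (hlin z).deriv ▸ hderiv_sub z hz)
    left_mem_uIcc right_mem_uIcc
  calc |f b - f a - deriv f a * (b - a)|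
      = ‖(f b - deriv f a * b) - (f a - deriv f a * a)‖ := by rw [Real.norm_eq_abs]; ring_nf
    _ ≤ max K 0 * |b - a| * ‖b - a‖ := this
    _ = max K 0 * (b - a) ^ 2 := by rw [Real.norm_eq_abs, mul_assoc, ← sq, sq_abs]

theorem hasFDerivAt_of_norm_sub_le_sq {𝕜 E F : Type*} [NontriviallyNormedField 𝕜]
    [NormedAddCommGroup E] [NormedSpace 𝕜 E] [NormedAddCommGroup F] [NormedSpace 𝕜 F]
    {f : E → F} {f' : E →L[𝕜] F} {x : E} {c : ℝ}
    (h : ∀ᶠ y in 𝓝 0, ‖f (x + y) - f x - f' y‖ ≤ c * ‖y‖ ^ 2) : HasFDerivAt f f' x := by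
  rw [hasFDerivAt_iff_isLittleO_nhds_zero]
  exact (IsBigO.of_bound c (by simpa using h)).trans_isLittleO (isLittleO_norm_pow_id one_lt_two)

section IntegralFunctional

variable {α : Type*} [MeasurableSpace α] {μ : Measure α}

theorem Continuous.integrable_comp_of_abs_le {ψ : ℝ → ℝ} (hψ : Continuous ψ) (hψ0 : ψ 0 = 0)
    {v : α → ℝ} (hv : AEStronglyMeasurable v μ) {R : ℝ} (hvR : ∀ a, |v a| ≤ R) {S : Set α}
    (hS : μ S ≠ ⊤) (hv0 : ∀ a ∉ S, v a = 0) : Integrable (fun a => ψ (v a)) μ := by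
  obtain ⟨N, hN⟩ := (isCompact_Icc (a := -R) (b := R)).exists_bound_of_continuousOn
    hψ.continuousOn
  refine (Measure.integrableOn_of_bounded hS (hψ.comp_aestronglyMeasurable hv)
    (ae_of_all _ fun a => hN _ (abs_le.mp (hvR a)))).integrable_of_forall_notMem_eq_zero ?_
  intro a ha
  simp [hv0 a ha, hψ0]

theorem hasFDerivAt_integral_comp {E : Type*} [NormedAddCommGroup E] [NormedSpace ℝ E]
    {φ : ℝ → ℝ} (hφ : ContDiff ℝ 2 φ) (hφ0 : φ 0 = 0) {u : E → α → ℝ} {S : Set α} {c : ℝ}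
    (hS : μ S ≠ ⊤) (hu_add : ∀ y z a, u (y + z) a = u y a + u z a)
    (hu_le : ∀ y a, |u y a| ≤ c * ‖y‖) (hu_zero : ∀ y, ∀ a ∉ S, u y a = 0)
    (hu_meas : ∀ y, AEStronglyMeasurable (u y) μ) {x : E} {D : E →L[ℝ] ℝ}
    (hD : ∀ h, D h = ∫ a, deriv φ (u x a) * u h a ∂μ) :
    HasFDerivAt (fun y => ∫ a, φ (u y a) ∂μ) D x := by
  set R := |c| * (‖x‖ + 1)
  have hx1 : ‖x‖ ≤ ‖x‖ + 1 := le_add_of_nonneg_right zero_le_one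
  have hu_le_R : ∀ y, ‖y‖ ≤ ‖x‖ + 1 → ∀ a, |u y a| ≤ R := fun y hy a =>
    (hu_le y a).trans (mul_le_mul (le_abs_self c) hy (norm_nonneg _) (abs_nonneg c))
  obtain ⟨L, hL0, hL⟩ := hφ.exists_abs_sub_sub_deriv_mul_le R
  have hφ' : Continuous (deriv φ) := hφ.continuous_deriv one_le_two
  obtain ⟨M, hM⟩ := (isCompact_Icc (a := -R) (b := R)).exists_bound_of_continuousOn
    hφ'.continuousOn
  have hint : ∀ y, ‖y‖ ≤ ‖x‖ + 1 → Integrable (fun a => φ (u y a)) μ := fun y hy =>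
    hφ.continuous.integrable_comp_of_abs_le hφ0 (hu_meas y) (hu_le_R y hy) hS (hu_zero y)
  have hint_deriv : ∀ h, Integrable (fun a => deriv φ (u x a) * u h a) μ := fun h =>
    (continuous_id.integrable_comp_of_abs_le rfl (hu_meas h) (hu_le h) hS (hu_zero h)).bdd_mul
      (hφ'.comp_aestronglyMeasurable (hu_meas x))
      (ae_of_all _ fun a => hM _ (abs_le.mp (hu_le_R x hx1 a)))
  refine hasFDerivAt_of_norm_sub_le_sq (c := L * c ^ 2 * μ.real S) ?_
  filter_upwards [Metric.closedBall_mem_nhds (0 : E) one_pos] with h hh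
  rw [mem_closedBall_zero_iff] at hh
  have hxh : ‖x + h‖ ≤ ‖x‖ + 1 := (norm_add_le _ _).trans (by linarith)
  have hint_diff : Integrable (fun a => φ (u (x + h) a) - φ (u x a)) μ :=
    (hint _ hxh).sub (hint x hx1)
  have hsplit : (∫ a, φ (u (x + h) a) ∂μ) - (∫ a, φ (u x a) ∂μ) - D h =
      ∫ a in S, (φ (u (x + h) a) - φ (u x a) - deriv φ (u x a) * u h a) ∂μ := by
    rw [setIntegral_eq_integral_of_forall_compl_eq_zero fun a ha => by simp [hu_zero _ a ha],
      integral_sub hint_diff (hint_deriv h),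
      integral_sub (hint _ hxh) (hint x hx1), hD]
  rw [hsplit]
  calc _ ≤ L * (c * ‖h‖) ^ 2 * μ.real S := by
        refine norm_setIntegral_le_of_norm_le_const hS.lt_top fun a _ => ?_
        have hTaylor := hL (u x a) (u (x + h) a) (hu_le_R x hx1 a) (hu_le_R _ hxh a)
        rw [hu_add, add_sub_cancel_left] at hTaylor
        have hbound := abs_le.mp (hu_le h a)
        rw [hu_add]
        exact hTaylor.trans (mul_le_mul_of_nonneg_left (sq_le_sq' hbound.1 hbound.2) hL0)
    _ = L * c ^ 2 * μ.real S * ‖h‖ ^ 2 := by ring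

end IntegralFunctional

section L2

variable {α : Type*} [MeasurableSpace α] {μ : Measure α}

theorem MeasureTheory.MemLp.integrable_of_ae_notMem_eq_zero {E : Type*} [NormedAddCommGroup E]
    {f : α → E} {p : ENNReal} (hf : MemLp f p μ) (hp : 1 ≤ p) {C : Set α} (hC : μ C ≠ ⊤)
    (h0 : ∀ᵐ x ∂μ, x ∉ C → f x = 0) : Integrable f μ :=
  have : IsFiniteMeasure (μ.restrict C) := isFiniteMeasure_restrict.mpr hC
  IntegrableOn.integrable_of_ae_notMem_eq_zero ((hf.restrict C).integrable hp) h0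

theorem inner_toLp_indicator {C : Set α} {G : α → ℝ} (hG : MemLp (C.indicator G) 2 μ)
    (f : Lp ℝ 2 μ) (hf : ∀ᵐ x ∂μ, x ∉ C → f x = 0) :
    ⟪hG.toLp _, f⟫_ℝ = ∫ x, G x * f x ∂μ := by
  rw [L2.inner_def]
  refine integral_congr_ae ?_
  filter_upwards [hG.coeFn_toLp, hf] with x hGx hfx
  by_cases hx : x ∈ C <;> simp [hGx, hx, hfx, mul_comm]

theorem Continuous.memLp_indicator {X E : Type*} [TopologicalSpace X] [T2Space X]
    [MeasurableSpace X] [OpensMeasurableSpace X] {μ : Measure X} [IsFiniteMeasureOnCompacts μ]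
    [NormedAddCommGroup E] [SecondCountableTopologyEither X E] {G : X → E} (hG : Continuous G)
    {C : Set X} (hC : IsCompact C) (p : ENNReal) : MemLp (C.indicator G) p μ := by
  obtain ⟨M, hM⟩ := hC.exists_bound_of_continuousOn hG.continuousOn
  refine (HasCompactSupport.intro hC fun x hx => indicator_of_notMem hx _).memLp_of_bound
    (hG.aestronglyMeasurable.indicator hC.measurableSet) (max M 0) (ae_of_all _ fun x => ?_)
  by_cases hx : x ∈ C
  · rw [indicator_of_mem hx]
    exact (hM x hx).trans (le_max_left _ _)
  · simp [hx]

end L2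

section CrossCorrelation

variable {I : ℝ × ℝ → ℝ}

lemma memLp_comp_add_right (hIc : Continuous I) (hIs : HasCompactSupport I) (z : ℝ × ℝ) :
    MemLp (fun x => I (x + z)) 2 volume :=
  (hIc.comp (continuous_add_const z)).memLp_of_hasCompactSupport
    (hIs.comp_homeomorph (Homeomorph.addRight z))

lemma crossCorr_eq_inner (hIc : Continuous I) (hIs : HasCompactSupport I)
    (F : Lp ℝ 2 (volume : Measure (ℝ × ℝ))) (z : ℝ × ℝ) :
    crossCorr F I z = ⟪F, (memLp_comp_add_right hIc hIs z).toLp _⟫_ℝ := by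
  rw [L2.inner_def, crossCorr]
  refine integral_congr_ae ?_
  filter_upwards [(memLp_comp_add_right hIc hIs z).coeFn_toLp] with x hx
  simp [hx, mul_comm]

lemma crossCorr_add (hIc : Continuous I) (hIs : HasCompactSupport I)
    (F G : Lp ℝ 2 (volume : Measure (ℝ × ℝ))) (z : ℝ × ℝ) :
    crossCorr ⇑(F + G) I z = crossCorr F I z + crossCorr G I z := by
  simp only [crossCorr_eq_inner hIc hIs, inner_add_left]

lemma abs_crossCorr_le (hIc : Continuous I) (hIs : HasCompactSupport I)
    (F : Lp ℝ 2 (volume : Measure (ℝ × ℝ))) (z : ℝ × ℝ) :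
    |crossCorr F I z| ≤ (eLpNorm I 2 volume).toReal * ‖F‖ := by
  rw [crossCorr_eq_inner hIc hIs, mul_comm]
  refine (abs_real_inner_le_norm _ _).trans_eq ?_
  rw [Lp.norm_toLp]
  congr 2
  exact eLpNorm_comp_measurePreserving hIc.aestronglyMeasurable
    (measurePreserving_add_right volume z)

lemma continuous_crossCorr (hIc : Continuous I) (hIs : HasCompactSupport I) {f : ℝ × ℝ → ℝ}
    (hf : LocallyIntegrable f volume) : Continuous (crossCorr f I) := by
  have hconv :
      Continuous (convolution f (fun x => I (-x)) (ContinuousLinearMap.mul ℝ ℝ) volume) :=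
    (hIs.comp_homeomorph (Homeomorph.neg _)).continuous_convolution_right _ hf
      (hIc.comp continuous_neg)
  convert hconv.comp continuous_neg using 1
  ext z
  simp [crossCorr, convolution_def, sub_eq_add_neg, add_comm]

lemma crossCorr_eq_zero_of_notMem_sub {f : ℝ × ℝ → ℝ} {C : Set (ℝ × ℝ)}
    (hf : ∀ᵐ x, x ∉ C → f x = 0) {z : ℝ × ℝ} (hz : z ∉ tsupport I - C) :
    crossCorr f I z = 0 := by
  refine integral_eq_zero_of_ae ?_
  filter_upwards [hf] with x hx
  by_cases hxC : x ∈ C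
  · have : I (x + z) = 0 :=
      image_eq_zero_of_notMem_tsupport fun h => hz ⟨x + z, h, x, hxC, add_sub_cancel_left x z⟩
    simp [this]
  · simp [hx hxC]

lemma HasCompactSupport.isCompact_tsupport_sub (hIs : HasCompactSupport I) {C : Set (ℝ × ℝ)}
    (hC : IsCompact C) : IsCompact (tsupport I - C) := by
  rw [sub_eq_add_neg]
  exact hIs.isCompact.add hC.neg

theorem integral_crossCorr_mul (hIc : Continuous I) (hIs : HasCompactSupport I)
    {ψ k : ℝ × ℝ → ℝ} {C : Set (ℝ × ℝ)} (hψ : Continuous ψ) (hC : IsCompact C)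
    (hk : Integrable k) (hk0 : ∀ᵐ z, z ∉ C → k z = 0) :
    ∫ z, crossCorr ψ I z * k z = ∫ x, ψ x * crossCorr k I x := by
  have hS := hIs.isCompact_tsupport_sub hC
  obtain ⟨M, hM⟩ := hS.exists_bound_of_continuousOn hψ.continuousOn
  obtain ⟨B, hB⟩ := hIs.exists_bound_of_continuous hIc
  have hint : Integrable (Function.uncurry fun z x => ψ x * I (x + z) * k z)
      (volume.prod volume) := by
    have hind : Integrable ((tsupport I - C).indicator fun _ => (1 : ℝ)) :=
      (integrable_indicator_iff hS.measurableSet).mpr (integrableOn_const hS.measure_lt_top.ne)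
    have hmeas : Continuous fun p : (ℝ × ℝ) × (ℝ × ℝ) => ψ p.2 * I (p.2 + p.1) :=
      (hψ.comp continuous_snd).mul (hIc.comp (continuous_snd.add continuous_fst))
    refine Integrable.mono' ((hk.norm.const_mul (M * B)).mul_prod hind)
      (hmeas.aestronglyMeasurable.mul hk.aestronglyMeasurable.comp_fst) ?_
    filter_upwards [Measure.quasiMeasurePreserving_fst.ae hk0] with ⟨z, x⟩ hz
    by_cases hx : x ∈ tsupport I - C
    · simp only [Function.uncurry_apply_pair, norm_mul, indicator_of_mem hx, mul_one]
      gcongr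
      · exact (norm_nonneg _).trans (hM x hx)
      · exact hM x hx
      · exact hB _
    · have : ψ x * I (x + z) * k z = 0 := by
        by_cases hzC : z ∈ C
        · have hI : I (x + z) = 0 := image_eq_zero_of_notMem_tsupport fun h =>
            hx ⟨x + z, h, z, hzC, add_sub_cancel_right x z⟩
          rw [hI, mul_zero, zero_mul]
        · rw [hz hzC, mul_zero]
      simp [Function.uncurry_apply_pair, this, indicator_of_notMem hx]
  calc ∫ z, crossCorr ψ I z * k z = ∫ z, ∫ x, ψ x * I (x + z) * k z := by
        simp only [crossCorr, integral_mul_const]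
    _ = ∫ x, ∫ z, ψ x * I (x + z) * k z := integral_integral_swap hint
    _ = ∫ x, ψ x * crossCorr k I x := by
        simp only [crossCorr, ← integral_const_mul]
        congr with x
        congr with z
        rw [add_comm z x]
        ring

end CrossCorrelation

theorem cnn_pooling_frechet_gradient_general
    (I : ℝ × ℝ → ℝ) (hIc : Continuous I) (hIs : HasCompactSupport I)
    (β : ℝ) (w : ℝ)
    (C : Set (ℝ × ℝ)) (hC : C = Set.Icc (-(w / 2), -(w / 2)) (w / 2, w / 2))
    (g : suppSubmodule C → ℝ)
    (hg : ∀ K : suppSubmodule C,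
      g K = ∫ x : ℝ × ℝ,
        swish β (crossCorr ((K : Lp ℝ 2 (volume : Measure (ℝ × ℝ))) : ℝ × ℝ → ℝ) I x)) :
    ∀ K : suppSubmodule C, ∃ D : suppSubmodule C →L[ℝ] ℝ,
      HasFDerivAt g D K ∧
      ∀ δK : suppSubmodule C,
        D δK = ∫ z : ℝ × ℝ,
          crossCorr (fun x => deriv (swish β)
              (crossCorr ((K : Lp ℝ 2 (volume : Measure (ℝ × ℝ))) : ℝ × ℝ → ℝ) I x)) I z *
            ((δK : Lp ℝ 2 (volume : Measure (ℝ × ℝ))) : ℝ × ℝ → ℝ) z := by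
  intro K
  have hCc : IsCompact C := hC ▸ isCompact_Icc
  have hcont : ∀ F : Lp ℝ 2 (volume : Measure (ℝ × ℝ)), Continuous (crossCorr F I) := fun F =>
    continuous_crossCorr hIc hIs ((Lp.memLp F).locallyIntegrable one_le_two)
  set ψ : ℝ × ℝ → ℝ := fun x => deriv (swish β) (crossCorr (K : Lp ℝ 2 volume) I x)
  have hψ : Continuous ψ := ((contDiff_swish β).continuous_deriv le_rfl).comp (hcont K)
  have hG : MemLp (C.indicator (crossCorr ψ I)) 2 volume :=
    (continuous_crossCorr hIc hIs hψ.locallyIntegrable).memLp_indicator (μ := volume) hCc 2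
  have hgrad : ∀ δK : suppSubmodule C,
      ⟪hG.toLp _, (δK : Lp ℝ 2 volume)⟫_ℝ = ∫ z, crossCorr ψ I z * (δK : Lp ℝ 2 volume) z :=
    fun δK => inner_toLp_indicator hG δK δK.2
  refine ⟨(innerSL ℝ (hG.toLp _)).comp (suppSubmodule C).subtypeL, ?_, hgrad⟩
  rw [show g = _ from funext hg]
  refine hasFDerivAt_integral_comp (E := suppSubmodule C) (contDiff_swish β) (swish_zero β)
    (hIs.isCompact_tsupport_sub hCc).measure_lt_top.ne (fun F G => crossCorr_add hIc hIs F G)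
    (fun F => abs_crossCorr_le hIc hIs F) (fun F _ hz => crossCorr_eq_zero_of_notMem_sub F.2 hz)
    (fun F => (hcont F).aestronglyMeasurable) fun δK => ?_
  have hδK : Integrable ((δK : Lp ℝ 2 (volume : Measure (ℝ × ℝ))) : ℝ × ℝ → ℝ) :=
    (Lp.memLp _).integrable_of_ae_notMem_eq_zero one_le_two hCc.measure_lt_top.ne δK.2
  exact (hgrad δK).trans (integral_crossCorr_mul hIc hIs hψ hCc hδK δK.2)

/-- The map `g(K) = ∫_{ℝ²} r_β((K ⋆ I)(x)) dx` on the subspace `V ⊆ L²(ℝ²)` of kernels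
supported in the square `C = [−w/2, w/2]²` is Fréchet differentiable at every `K ∈ V`,
with derivative `δK ↦ ∫_{ℝ²} (r_β'(K ⋆ I) ⋆ I)(z)·δK(z) dz`; i.e. the `L²` gradient of
`g` at `K` is the restriction of `r_β'(K ⋆ I) ⋆ I` to `C`. -/
theorem cnn_pooling_frechet_gradient
    (I : ℝ × ℝ → ℝ) (hIc : Continuous I) (hIs : HasCompactSupport I)
    (β : ℝ) (hβ : 0 < β) (w : ℝ) (hw : 0 < w)
    (C : Set (ℝ × ℝ)) (hC : C = Set.Icc (-(w / 2), -(w / 2)) (w / 2, w / 2))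
    (g : suppSubmodule C → ℝ)
    (hg : ∀ K : suppSubmodule C,
      g K = ∫ x : ℝ × ℝ,
        swish β (crossCorr ((K : Lp ℝ 2 (volume : Measure (ℝ × ℝ))) : ℝ × ℝ → ℝ) I x)) :
    ∀ K : suppSubmodule C, ∃ D : suppSubmodule C →L[ℝ] ℝ,
      HasFDerivAt g D K ∧
      ∀ δK : suppSubmodule C,
        D δK = ∫ z : ℝ × ℝ,
          crossCorr (fun x => deriv (swish β)
              (crossCorr ((K : Lp ℝ 2 (volume : Measure (ℝ × ℝ))) : ℝ × ℝ → ℝ) I x)) I z *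
            ((δK : Lp ℝ 2 (volume : Measure (ℝ × ℝ))) : ℝ × ℝ → ℝ) z :=
  cnn_pooling_frechet_gradient_general I hIc hIs β w C hC g hg
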